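/- For every integer g ≥ 0, the canonical genus-g graph C_g is a connected closed 3-colored graph with 2(2g+1) vertices and 3(2g+1) edges which has exactly one bicolored face for each of the three pairs of colors (i.e. each of the permutations σ₂⁻¹∘σ₁, σ₃⁻¹∘σ₁ and σ₃⁻¹∘σ₂ of its white vertex set is a single cycle of length 2g+1); consequently its Euler characteristic is χ(C_g) = 2(2g+1) − 3(2g+1) + 3 = 2 − 2g. -/

import Mathlib

/-!  Closed colored graphs (colored tensor model / matrix model Feynman graphs). -/

/-- A closed `D`-colored graph: a finite set `W` of white vertices, a finite set `B`
of black vertices, and for each color `c : Fin D` a bijection `σ c : W ≃ B`;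
the color-`c` edges are the pairs `(w, σ c w)`. -/
structure CGraph (D : ℕ) where
  W : Type
  B : Type
  finW : Finite W
  finB : Finite B
  σ : Fin D → W ≃ B

namespace CGraph

variable {D : ℕ}

/-- The permutation `σ_d⁻¹ ∘ σ_c` of the white vertices. Its orbits are the
(cd)-bicolored faces. -/
def biperm (G : CGraph D) (c d : Fin D) : Equiv.Perm G.W :=
  (G.σ c).trans (G.σ d).symm

/-- The "same cycle" setoid of a permutation. -/
def cycleSetoid {α : Type*} (π : Equiv.Perm α) : Setoid α where
  r := π.SameCycle
  iseqv := ⟨fun _ => ⟨0, by simp⟩, fun h => h.symm, fun h h' => h.trans h'⟩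

/-- The number of cycles (orbits) of a permutation. -/
noncomputable def numCycles {α : Type*} (π : Equiv.Perm α) : ℕ :=
  Nat.card (Quotient (cycleSetoid π))

/-- Total number of bicolored faces of a closed 3-colored graph
(over the three pairs of colors). -/
noncomputable def faces (G : CGraph 3) : ℕ :=
  numCycles (G.biperm 0 1) + numCycles (G.biperm 0 2) + numCycles (G.biperm 1 2)

/-- Euler characteristic of a closed 3-colored graph:
`χ(G) = #vertices − #edges + #faces = 2|W| − 3|W| + F(G)`. -/
noncomputable def euler (G : CGraph 3) : ℤ :=
  2 * (Nat.card G.W : ℤ) - 3 * (Nat.card G.W : ℤ) + (faces G : ℤ)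

/-- Connectedness: the subgroup generated by all the permutations `σ_d⁻¹ ∘ σ_c`
acts transitively on the white vertices. -/
def Connected (G : CGraph D) : Prop :=
  ∀ v w : G.W,
    ∃ π ∈ Subgroup.closure {π : Equiv.Perm G.W | ∃ c d : Fin D, π = G.biperm c d}, π v = w

/-- The number of white vertices in the (cd)-bicolored face through `v`
(the face itself has twice as many vertices). -/
noncomputable def faceSize (G : CGraph 3) (c d : Fin 3) (v : G.W) : ℕ :=
  Nat.card {w : G.W // (G.biperm c d).SameCycle v w}

/-- A closed 3-colored graph with colors `{0,1,2}` is a Feynman graph of the quartic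
complex matrix model iff every (12)-bicolored face has exactly 4 vertices, i.e. every
orbit of `σ₂⁻¹ ∘ σ₁` has exactly 2 elements. -/
def QuarticFeynman (G : CGraph 3) : Prop :=
  ∀ v : G.W, G.faceSize 1 2 v = 2

end CGraph

/-- The canonical genus-`g` graph `C_g`: the closed 3-colored graph (colors `1,2,3`,
here indexed by `Fin 3` as `0 ↦ color 1`, `1 ↦ color 2`, `2 ↦ color 3`) with white
vertices `w_i` and black vertices `b_i` indexed by `i ∈ ℤ/(2g+1)`, with color-1 edges
`w_i b_i`, color-2 edges `w_i b_{i-1}` and color-3 edges `w_i b_{i+g}`. -/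
def CGraph.canonical (g : ℕ) : CGraph 3 where
  W := ZMod (2 * g + 1)
  B := ZMod (2 * g + 1)
  finW := by infer_instance
  finB := by infer_instance
  σ := fun c =>
    if c = 0 then Equiv.refl _
    else if c = 1 then Equiv.subRight (1 : ZMod (2 * g + 1))
    else Equiv.addRight (g : ZMod (2 * g + 1))

/-! Translation by `a` permutes a group in a single cycle exactly when `a` generates it; in
`ZMod n` this holds for every unit `a`. Each `σ_c` of `C_g` is a translation of
`ℤ/(2g+1)`, so each `σ_d⁻¹ ∘ σ_c` is translation by a difference of the shifts `0, -1, g`,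
namely `±1`, `±g` or `±(g+1)`, and these are units because `2g + 1 = 0`. -/

lemma Equiv.sameCycle_addRight_iff {G : Type*} [AddGroup G] {a v w : G} :
    (Equiv.addRight a).SameCycle v w ↔ ∃ k : ℤ, v + k • a = w := by
  simp only [Equiv.Perm.SameCycle, Equiv.zsmul_addRight, Equiv.coe_addRight]

lemma ZMod.sameCycle_addRight_of_isUnit {n : ℕ} {a : ZMod n} (ha : IsUnit a) (v w : ZMod n) :
    (Equiv.addRight a).SameCycle v w := by
  obtain ⟨u, rfl⟩ := ha
  refine Equiv.sameCycle_addRight_iff.mpr ⟨ZMod.cast ((w - v) * (↑u⁻¹ : ZMod n)), ?_⟩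
  rw [zsmul_eq_mul, ZMod.intCast_zmod_cast, mul_assoc, Units.inv_mul, mul_one, add_sub_cancel]

lemma ZMod.natCast_mul_neg_two (g : ℕ) : (g : ZMod (2 * g + 1)) * -2 = 1 := by
  have h : ((2 * g + 1 : ℕ) : ZMod (2 * g + 1)) = 0 := ZMod.natCast_self _
  push_cast at h
  linear_combination -h

namespace CGraph

variable {D : ℕ}

lemma numCycles_eq_one_of_forall_sameCycle {α : Type*} [Nonempty α] {π : Equiv.Perm α}
    (h : ∀ v w : α, π.SameCycle v w) : numCycles π = 1 :=
  Nat.card_eq_one_iff_unique.mpr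
    ⟨⟨fun x y => Quotient.inductionOn₂ x y fun v w => Quotient.sound (h v w)⟩,
      ⟨Quotient.mk _ (Classical.arbitrary α)⟩⟩

lemma connected_of_forall_sameCycle {G : CGraph D} {c d : Fin D}
    (h : ∀ v w : G.W, (G.biperm c d).SameCycle v w) : G.Connected := by
  intro v w
  obtain ⟨k, hk⟩ := h v w
  refine ⟨G.biperm c d ^ k, Subgroup.zpow_mem _ (Subgroup.subset_closure ?_) k, hk⟩
  exact ⟨c, d, rfl⟩

lemma faces_eq_three_of_forall_sameCycle (G : CGraph 3) [Nonempty G.W]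
    (h : ∀ c d : Fin 3, c ≠ d → ∀ v w : G.W, (G.biperm c d).SameCycle v w) :
    G.faces = 3 := by
  rw [faces, numCycles_eq_one_of_forall_sameCycle (h 0 1 (by decide)),
    numCycles_eq_one_of_forall_sameCycle (h 0 2 (by decide)),
    numCycles_eq_one_of_forall_sameCycle (h 1 2 (by decide))]

section canonical

variable (g : ℕ)

def canonicalShift : Fin 3 → ZMod (2 * g + 1) := ![0, -1, g]

lemma canonical_σ (c : Fin 3) : (canonical g).σ c = Equiv.addRight (canonicalShift g c) := by
  fin_cases c <;> ext (x : ZMod (2 * g + 1))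
  · exact (add_zero x).symm
  · exact sub_eq_add_neg x 1
  · rfl

lemma canonical_biperm (c d : Fin 3) :
    (canonical g).biperm c d = Equiv.addRight (canonicalShift g c - canonicalShift g d) := by
  rw [biperm, canonical_σ, canonical_σ]
  ext (x : ZMod (2 * g + 1))
  show x + canonicalShift g c + -canonicalShift g d = x + (canonicalShift g c - canonicalShift g d)
  ring

lemma isUnit_canonicalShift_sub {c d : Fin 3} (hcd : c ≠ d) :
    IsUnit (canonicalShift g c - canonicalShift g d) := by
  have hg : IsUnit (g : ZMod (2 * g + 1)) := IsUnit.of_mul_eq_one _ (ZMod.natCast_mul_neg_two g)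
  have hg1 : IsUnit ((g : ZMod (2 * g + 1)) + 1) :=
    IsUnit.of_mul_eq_one 2 (by linear_combination -ZMod.natCast_mul_neg_two g)
  fin_cases c <;> fin_cases d <;>
    simp [canonicalShift, neg_sub_left, -neg_add_rev, hg, hg1] at hcd ⊢

end canonical

end CGraph

theorem canonical_graph_props (g : ℕ) :
    (CGraph.canonical g).Connected ∧
    Nat.card (CGraph.canonical g).W = 2 * g + 1 ∧
    Nat.card (CGraph.canonical g).B = 2 * g + 1 ∧
    3 * Nat.card (CGraph.canonical g).W = 3 * (2 * g + 1) ∧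
    (∀ c d : Fin 3, c ≠ d →
      ∀ v w : (CGraph.canonical g).W, ((CGraph.canonical g).biperm c d).SameCycle v w) ∧
    (CGraph.canonical g).faces = 3 ∧
    (CGraph.canonical g).euler = 2 - 2 * (g : ℤ) := by
  have hcycle : ∀ c d : Fin 3, c ≠ d →
      ∀ v w : (CGraph.canonical g).W, ((CGraph.canonical g).biperm c d).SameCycle v w := by
    intro c d hcd
    rw [CGraph.canonical_biperm]
    exact ZMod.sameCycle_addRight_of_isUnit (CGraph.isUnit_canonicalShift_sub g hcd)
  have hW : Nat.card (CGraph.canonical g).W = 2 * g + 1 := Nat.card_zmod (2 * g + 1)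
  have : Nonempty (CGraph.canonical g).W := inferInstanceAs (Nonempty (ZMod (2 * g + 1)))
  have hfaces : (CGraph.canonical g).faces = 3 := CGraph.faces_eq_three_of_forall_sameCycle _ hcycle
  refine ⟨CGraph.connected_of_forall_sameCycle (hcycle 0 1 (by decide)), hW,
    Nat.card_zmod (2 * g + 1), by rw [hW], hcycle, hfaces, ?_⟩
  rw [CGraph.euler, hfaces, hW]
  push_cast
  ring
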